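/- arXiv:2507.07041 — 3 statements merged into one kernel-verified Lean document; each statement's English description precedes it below -/
import Mathlib

section
/- Parallel composition for local differential privacy: let M_1, …, M_n be Markov kernels, where M_i maps a measurable space 𝒳 to a measurable space ℛ_i and satisfies (ε_i, δ_i)-LDP. Then the product mechanism that, on input (x_1, …, x_n) ∈ 𝒳^n, outputs the product measure M_1(x_1) ⊗ ⋯ ⊗ M_n(x_n) on ℛ_1 × ⋯ × ℛ_n satisfies (max_i ε_i, max_i δ_i)-LDP with respect to changing any single coordinate: for any two tuples (x_1,…,x_n) and (x_1′,…,x_n′) differing in exactly one coordinate and any measurable set E ⊆ ℛ_1 × ⋯ × ℛ_n, (M_1(x_1) ⊗ ⋯ ⊗ M_n(x_n))(E) ≤ e^{max_i ε_i} · (M_1(x_1′) ⊗ ⋯ ⊗ M_n(x_n′))(E) + max_i δ_i. -/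
open MeasureTheory ProbabilityTheory

/-- A mechanism `M` (a map from inputs to output measures) satisfies
`(ε, δ)`-local differential privacy if for every pair of individual inputs
`x, x'` and every measurable event `E`,
`M x E ≤ e^ε * M x' E + δ`. -/
def IsLDP {𝒳 ℛ : Type*} [MeasurableSpace 𝒳] [MeasurableSpace ℛ]
    (M : 𝒳 → Measure ℛ) (ε δ : ℝ) : Prop :=
  ∀ x x' : 𝒳, ∀ E : Set ℛ, MeasurableSet E →
    M x E ≤ ENNReal.ofReal (Real.exp ε) * M x' E + ENNReal.ofReal δ

/-!
Write `μ ≤ c • ν + d` for `μ E ≤ c * ν E + d` on all measurable `E`. This relation is preserved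
by push-forwards and by taking the product with a common probability measure, since
`(μ ⊗ ρ) E = ∫ μ(E_y) dρ(y) ≤ ∫ (c ν(E_y) + d) dρ(y) = c (ν ⊗ ρ) E + d`. Splitting
`∏ᵢ αᵢ ≃ αⱼ × ∏_{i ≠ j} αᵢ`, a relation `μ j ≤ c • ν j + d` in the one coordinate where the two
families differ therefore lifts to their product measures.
-/

namespace MeasureTheory.Measure

open scoped ENNReal

section

variable {α β : Type*} [MeasurableSpace α] [MeasurableSpace β]

def LeMulAdd (μ : Measure α) (c : ℝ≥0∞) (ν : Measure α) (d : ℝ≥0∞) : Prop :=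
  ∀ E, MeasurableSet E → μ E ≤ c * ν E + d

variable {μ ν : Measure α} {c d : ℝ≥0∞}

theorem LeMulAdd.mono (h : LeMulAdd μ c ν d) {c' d' : ℝ≥0∞} (hc : c ≤ c') (hd : d ≤ d') :
    LeMulAdd μ c' ν d' := fun E hE =>
  (h E hE).trans (by gcongr)

theorem LeMulAdd.map (h : LeMulAdd μ c ν d) {f : α → β} (hf : Measurable f) :
    LeMulAdd (μ.map f) c (ν.map f) d := fun E hE => by
  rw [map_apply hf hE, map_apply hf hE]
  exact h _ (hf hE)

theorem LeMulAdd.prod_right [SFinite μ] [SFinite ν] (h : LeMulAdd μ c ν d)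
    (ρ : Measure β) [IsProbabilityMeasure ρ] :
    LeMulAdd (μ.prod ρ) c (ν.prod ρ) d := fun E hE => by
  have hslice : ∀ y, MeasurableSet ((fun x => (x, y)) ⁻¹' E) := fun y => measurable_prodMk_right hE
  calc μ.prod ρ E = ∫⁻ y, μ ((fun x => (x, y)) ⁻¹' E) ∂ρ := prod_apply_symm hE
    _ ≤ ∫⁻ y, (c * ν ((fun x => (x, y)) ⁻¹' E) + d) ∂ρ := lintegral_mono fun y => h _ (hslice y)
    _ = c * ν.prod ρ E + d := by
      rw [lintegral_add_right _ measurable_const, lintegral_const, measure_univ, mul_one,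
        lintegral_const_mul _ (measurable_measure_prodMk_right hE), prod_apply_symm hE]

end

theorem LeMulAdd.pi {ι : Type*} [Fintype ι] {α : ι → Type*} [∀ i, MeasurableSpace (α i)]
    {μ ν : ∀ i, Measure (α i)} {c d : ℝ≥0∞} [∀ i, IsProbabilityMeasure (μ i)]
    [∀ i, IsProbabilityMeasure (ν i)] {j : ι} (h : LeMulAdd (μ j) c (ν j) d)
    (hμν : ∀ i, i ≠ j → μ i = ν i) :
    LeMulAdd (Measure.pi μ) c (Measure.pi ν) d := by
  classical
  -- `measurePreserving_piEquivPiSubtypeProd` uses this instance, not `Fintype.subtypeEq`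
  let _ : Fintype {i // i = j} := Subtype.fintype _
  have hpiUnique : ∀ ρ : ∀ i, Measure (α i),
      Measure.pi (fun i : {i // i = j} => ρ i) =
        (ρ j).map (MeasurableEquiv.piUnique fun i : {i // i = j} => α i).symm :=
    fun ρ => ((measurePreserving_piUnique fun i : {i // i = j} => ρ i).symm _).map_eq.symm
  have hsplit : ∀ ρ : ∀ i, Measure (α i), [∀ i, SigmaFinite (ρ i)] →
      ((Measure.pi fun i : {i // i = j} => ρ i).prod (Measure.pi fun i : {i // i ≠ j} => ρ i)).map
        (MeasurableEquiv.piEquivPiSubtypeProd α (· = j)).symm = Measure.pi ρ :=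
    fun ρ _ => ((measurePreserving_piEquivPiSubtypeProd ρ (· = j)).symm _).map_eq
  have hrest : (Measure.pi fun i : {i // i ≠ j} => μ i) = Measure.pi fun i : {i // i ≠ j} => ν i :=
    congrArg Measure.pi (funext fun i => hμν i i.2)
  have hj : LeMulAdd (Measure.pi fun i : {i // i = j} => μ i) c
      (Measure.pi fun i : {i // i = j} => ν i) d := by
    rw [hpiUnique μ, hpiUnique ν]
    exact h.map (MeasurableEquiv.measurable _)
  have := (hj.prod_right (Measure.pi fun i : {i // i ≠ j} => μ i)).map
    (MeasurableEquiv.piEquivPiSubtypeProd α (· = j)).symm.measurable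
  rwa [hsplit μ, hrest, hsplit ν] at this

end MeasureTheory.Measure

theorem parallel_composition_ldp_general {n : ℕ} {𝒳 : Type*} [MeasurableSpace 𝒳]
    {ℛ : Fin n → Type*} [∀ i, MeasurableSpace (ℛ i)]
    (M : ∀ i, Kernel 𝒳 (ℛ i)) [∀ i, IsMarkovKernel (M i)]
    (ε δ : Fin n → ℝ)
    (hLDP : ∀ i, IsLDP (fun x => M i x) (ε i) (δ i))
    (x x' : Fin n → 𝒳) (j : Fin n)
    (hsame : ∀ i, i ≠ j → x i = x' i)
    (E : Set (∀ i, ℛ i)) (hE : MeasurableSet E) :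
    Measure.pi (fun i => M i (x i)) E ≤
      ENNReal.ofReal (Real.exp (⨆ i, ε i)) * Measure.pi (fun i => M i (x' i)) E
        + ENNReal.ofReal (⨆ i, δ i) := by
  have hj : Measure.LeMulAdd (M j (x j)) (ENNReal.ofReal (Real.exp (⨆ i, ε i))) (M j (x' j))
      (ENNReal.ofReal (⨆ i, δ i)) :=
    Measure.LeMulAdd.mono (hLDP j (x j) (x' j))
      (ENNReal.ofReal_le_ofReal (Real.exp_le_exp.mpr (le_ciSup (Finite.bddAbove_range ε) j)))
      (ENNReal.ofReal_le_ofReal (le_ciSup (Finite.bddAbove_range δ) j))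
  exact hj.pi (fun i hi => by rw [hsame i hi]) E hE

/-- **Parallel composition for local differential privacy.**
If the Markov kernels `M i : 𝒳 → ℛ i`, `i = 1, …, n`, satisfy `(ε i, δ i)`-LDP
respectively, then the product mechanism
`(x 1, …, x n) ↦ M 1 (x 1) ⊗ ⋯ ⊗ M n (x n)` satisfies
`(max_i ε i, max_i δ i)`-LDP with respect to changing any single coordinate. -/
theorem parallel_composition_ldp {n : ℕ} {𝒳 : Type*} [MeasurableSpace 𝒳]
    {ℛ : Fin n → Type*} [∀ i, MeasurableSpace (ℛ i)]
    (M : ∀ i, Kernel 𝒳 (ℛ i)) [∀ i, IsMarkovKernel (M i)]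
    (ε δ : Fin n → ℝ)
    (hLDP : ∀ i, IsLDP (fun x => M i x) (ε i) (δ i))
    (x x' : Fin n → 𝒳) (j : Fin n)
    (hdiff : x j ≠ x' j) (hsame : ∀ i, i ≠ j → x i = x' i)
    (E : Set (∀ i, ℛ i)) (hE : MeasurableSet E) :
    Measure.pi (fun i => M i (x i)) E ≤
      ENNReal.ofReal (Real.exp (⨆ i, ε i)) * Measure.pi (fun i => M i (x' i)) E
        + ENNReal.ofReal (⨆ i, δ i) :=
  parallel_composition_ldp_general M ε δ hLDP x x' j hsame E hE
end

section
/- Privacy of the LDP-SGD iterate (sequential parallel composition): let K_1, …, K_n be Markov kernels, where K_i maps ℝ^d × 𝒳 to ℝ^d and, for every fixed θ ∈ ℝ^d, the kernel x ↦ K_i((θ, x)) satisfies (ε_i, δ_i)-LDP. Fix an initial point θ_0 ∈ ℝ^d and define the sequentially composed mechanism M_n from 𝒳^n to ℝ^d as the law of θ_n, where θ_1 ∼ K_1((θ_0, x_1)) and, conditionally on θ_{i−1}, θ_i ∼ K_i((θ_{i−1}, x_i)) for i = 2, …, n, with the randomness of distinct steps independent. Then M_n satisfies (max_{1≤j≤n}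 ε_j, max_{1≤j≤n} δ_j)-LDP with respect to each individual's datum: for any two inputs (x_1,…,x_n) and (x_1′,…,x_n′) differing in exactly one coordinate and any measurable set E ⊆ ℝ^d, M_n(x_1,…,x_n)(E) ≤ e^{max_j ε_j} · M_n(x_1′,…,x_n′)(E) + max_j δ_j. -/
/-!
Until step `j` the two runs have the same law. At step `j + 1` the LDP inequality of the kernel,
integrated against that common law, gives `μ E ≤ c ν E + δ` for every event; a Hahn decomposition
upgrades this to a measure inequality `μ ≤ c • ν + τ` with a slack measure `τ` of mass at most
`δ`. Every later step applies the same Markov kernel to both runs, which preserves such an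
inequality and the mass of the slack.
-/

open MeasureTheory ProbabilityTheory

/-- The sequentially composed mechanism obtained from update kernels
`K i : Θ × 𝒳 → Θ` (each step `i + 1` updates the current iterate `θ` using the
datum `x i`, modelling one noisy SGD step), started at `θ₀`.  `seqLaw K θ₀ x n`
is the law of the `n`-th iterate `θ_n` on input data `x`, the randomness of
distinct steps being independent. -/
noncomputable def seqLaw {Θ 𝒳 : Type*} [MeasurableSpace Θ] [MeasurableSpace 𝒳]
    (K : ℕ → Kernel (Θ × 𝒳) Θ) (θ₀ : Θ) (x : ℕ → 𝒳) : ℕ → Measure Θ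
  | 0 => Measure.dirac θ₀
  | (i + 1) => (seqLaw K θ₀ x i).bind (fun θ => K i (θ, x i))

open ENNReal

namespace MeasureTheory.Measure

variable {α β : Type*} [MeasurableSpace α] [MeasurableSpace β]

lemma comp_mono {μ ν : Measure α} (h : μ ≤ ν) (κ : Kernel α β) : κ ∘ₘ μ ≤ κ ∘ₘ ν := by
  rw [Measure.le_iff]
  intro s hs
  rw [bind_apply hs κ.aemeasurable, bind_apply hs κ.aemeasurable]
  exact lintegral_mono' h le_rfl

lemma comp_apply_le_of_forall_le (μ : Measure α) [IsProbabilityMeasure μ] {κ η : Kernel α β}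
    {s : Set β} (hs : MeasurableSet s) {c D : ℝ≥0∞} (h : ∀ a, κ a s ≤ c * η a s + D) :
    (κ ∘ₘ μ) s ≤ c * (η ∘ₘ μ) s + D :=
  calc (κ ∘ₘ μ) s = ∫⁻ a, κ a s ∂μ := bind_apply hs κ.aemeasurable
    _ ≤ ∫⁻ a, (c * η a s + D) ∂μ := lintegral_mono h
    _ = c * (η ∘ₘ μ) s + D := by
      rw [lintegral_add_right _ measurable_const, lintegral_const_mul c (η.measurable_coe hs),
        lintegral_const, measure_univ, mul_one, bind_apply hs η.aemeasurable]

lemma restrict_le_restrict_of_subset_le {μ ν : Measure α} {s : Set α} (hs : MeasurableSet s)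
    (h : ∀ t, MeasurableSet t → t ⊆ s → μ t ≤ ν t) : μ.restrict s ≤ ν.restrict s := by
  rw [Measure.le_iff]
  intro t ht
  rw [restrict_apply ht, restrict_apply ht]
  exact h _ (ht.inter hs) Set.inter_subset_right

lemma exists_le_add_of_forall_le {μ ν : Measure α} [IsFiniteMeasure μ] [IsFiniteMeasure ν]
    {D : ℝ≥0∞} (h : ∀ s, MeasurableSet s → μ s ≤ ν s + D) :
    ∃ τ : Measure α, τ Set.univ ≤ D ∧ μ ≤ ν + τ := by
  obtain ⟨s, hs, hνμ, hμν⟩ := hahn_decomposition μ ν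
  have hle_on := restrict_le_restrict_of_subset_le hs hνμ
  have hle_off := restrict_le_restrict_of_subset_le hs.compl hμν
  refine ⟨μ.restrict s - ν.restrict s, ?_, ?_⟩
  · rw [sub_apply .univ hle_on, restrict_apply_univ, restrict_apply_univ, tsub_le_iff_right,
      add_comm]
    exact h s hs
  · calc μ = μ.restrict s + μ.restrict sᶜ := (restrict_add_restrict_compl hs).symm
      _ ≤ μ.restrict s + ν.restrict sᶜ := add_le_add_right hle_off _
      _ = ν + (μ.restrict s - ν.restrict s) := by
        rw [← sub_add_cancel_of_le hle_on, add_assoc, restrict_add_restrict_compl hs,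
          sub_add_cancel_of_le hle_on, add_comm]

lemma exists_comp_le_smul_comp_add {μ ν τ : Measure α} {c : ℝ≥0∞} (h : μ ≤ c • ν + τ)
    (κ : Kernel α β) [IsMarkovKernel κ] :
    ∃ τ' : Measure β, τ' Set.univ = τ Set.univ ∧ κ ∘ₘ μ ≤ c • (κ ∘ₘ ν) + τ' :=
  ⟨κ ∘ₘ τ, comp_apply_univ, by simpa only [comp_add, comp_smul] using comp_mono h κ⟩

end MeasureTheory.Measure

section seqLaw

variable {Θ 𝒳 : Type*} [MeasurableSpace Θ] [MeasurableSpace 𝒳] (K : ℕ → Kernel (Θ × 𝒳) Θ)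
  (θ₀ : Θ)

lemma seqLaw_succ (x : ℕ → 𝒳) (i : ℕ) :
    seqLaw K θ₀ x (i + 1) = (K i).sectL (x i) ∘ₘ seqLaw K θ₀ x i :=
  rfl

instance isProbabilityMeasure_seqLaw [∀ i, IsMarkovKernel (K i)] (x : ℕ → 𝒳) (m : ℕ) :
    IsProbabilityMeasure (seqLaw K θ₀ x m) := by
  induction m with
  | zero => exact Measure.dirac.isProbabilityMeasure
  | succ i ih => rw [seqLaw_succ]; infer_instance

lemma seqLaw_congr {x x' : ℕ → 𝒳} {m : ℕ} (h : ∀ i < m, x i = x' i) :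
    seqLaw K θ₀ x m = seqLaw K θ₀ x' m := by
  induction m with
  | zero => rfl
  | succ i ih =>
    rw [seqLaw_succ, seqLaw_succ, ih fun k hk => h k (by omega), h i (by omega)]

theorem exists_seqLaw_le_smul_add [∀ i, IsMarkovKernel (K i)] {x x' : ℕ → 𝒳} {j n : ℕ}
    (hj : j < n) (hsame : ∀ i < n, i ≠ j → x i = x' i) {c D : ℝ≥0∞} (hc : c ≠ ∞)
    (hK : ∀ θ E, MeasurableSet E → K j (θ, x j) E ≤ c * K j (θ, x' j) E + D) :
    ∃ τ : Measure Θ, τ Set.univ ≤ D ∧ seqLaw K θ₀ x n ≤ c • seqLaw K θ₀ x' n + τ := by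
  induction n, hj using Nat.le_induction with
  | base =>
    have := (seqLaw K θ₀ x' (j + 1)).smul_finite hc
    refine Measure.exists_le_add_of_forall_le fun E hE => ?_
    rw [Measure.smul_apply, smul_eq_mul, seqLaw_succ, seqLaw_succ,
      seqLaw_congr K θ₀ fun i hi => hsame i (by omega) (by omega)]
    exact Measure.comp_apply_le_of_forall_le _ hE fun θ => hK θ E hE
  | succ m hjm ih =>
    obtain ⟨τ, hτ, hle⟩ := ih fun i hi hij => hsame i (by omega) hij
    obtain ⟨τ', hτ', hle'⟩ := Measure.exists_comp_le_smul_comp_add hle ((K m).sectL (x m))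
    refine ⟨τ', hτ' ▸ hτ, ?_⟩
    rwa [seqLaw_succ, seqLaw_succ, ← hsame m (by omega) (by omega)]

end seqLaw

theorem ldp_sgd_privacy_general {d n : ℕ} {𝒳 : Type*} [MeasurableSpace 𝒳]
    (K : ℕ → Kernel ((Fin d → ℝ) × 𝒳) (Fin d → ℝ)) [∀ i, IsMarkovKernel (K i)]
    (ε δ : ℕ → ℝ)
    (hLDP : ∀ i, i < n → ∀ θ : Fin d → ℝ, IsLDP (fun x => K i (θ, x)) (ε i) (δ i))
    (θ₀ : Fin d → ℝ) (x x' : ℕ → 𝒳) (j : ℕ) (hj : j < n)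
    (hsame : ∀ i, i < n → i ≠ j → x i = x' i)
    (E : Set (Fin d → ℝ)) :
    seqLaw K θ₀ x n E ≤
      ENNReal.ofReal (Real.exp (⨆ i : Fin n, ε i)) * seqLaw K θ₀ x' n E
        + ENNReal.ofReal (⨆ i : Fin n, δ i) := by
  obtain ⟨τ, hτ, hle⟩ := exists_seqLaw_le_smul_add K θ₀ hj hsame ofReal_ne_top
    fun θ => hLDP j hj θ (x j) (x' j)
  have hε : ε j ≤ ⨆ i : Fin n, ε i :=
    le_ciSup (f := fun i : Fin n => ε i) (Set.finite_range _).bddAbove ⟨j, hj⟩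
  have hδ : δ j ≤ ⨆ i : Fin n, δ i :=
    le_ciSup (f := fun i : Fin n => δ i) (Set.finite_range _).bddAbove ⟨j, hj⟩
  calc seqLaw K θ₀ x n E ≤ ENNReal.ofReal (Real.exp (ε j)) * seqLaw K θ₀ x' n E + τ E := hle E
    _ ≤ _ := by
      gcongr
      exact (measure_mono (Set.subset_univ E)).trans (hτ.trans (ofReal_le_ofReal hδ))

/-- **Privacy of the LDP-SGD iterate (sequential parallel composition).**
If for every fixed current iterate `θ` the update kernel `x ↦ K i (θ, x)` of
step `i + 1` satisfies `(ε i, δ i)`-LDP, then the sequentially composed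
mechanism `M_n = seqLaw K θ₀ · n` (the law of the `n`-th LDP-SGD iterate)
satisfies `(max_j ε j, max_j δ j)`-LDP with respect to each individual's datum:
for inputs differing in exactly one coordinate among the `n` used ones and any
measurable `E ⊆ ℝ^d`, the LDP inequality holds with the maximal budgets. -/
theorem ldp_sgd_privacy {d n : ℕ} {𝒳 : Type*} [MeasurableSpace 𝒳]
    (K : ℕ → Kernel ((Fin d → ℝ) × 𝒳) (Fin d → ℝ)) [∀ i, IsMarkovKernel (K i)]
    (ε δ : ℕ → ℝ)
    (hLDP : ∀ i, i < n → ∀ θ : Fin d → ℝ, IsLDP (fun x => K i (θ, x)) (ε i) (δ i))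
    (θ₀ : Fin d → ℝ) (x x' : ℕ → 𝒳) (j : ℕ) (hj : j < n)
    (hdiff : x j ≠ x' j) (hsame : ∀ i, i < n → i ≠ j → x i = x' i)
    (E : Set (Fin d → ℝ)) (hE : MeasurableSet E) :
    seqLaw K θ₀ x n E ≤
      ENNReal.ofReal (Real.exp (⨆ i : Fin n, ε i)) * seqLaw K θ₀ x' n E
        + ENNReal.ofReal (⨆ i : Fin n, δ i) :=
  ldp_sgd_privacy_general K ε δ hLDP θ₀ x x' j hj hsame E
end

section
/- Gaussian differential privacy duality for the Gaussian mechanism: let f : 𝒳 → ℝ^d have bounded ℓ₂-sensitivity sup_{x, x′ ∈ 𝒳} ‖f(x) − f(x′)‖₂ ≤ Δ for some Δ > 0, let μ > 0, and define the mechanism M(x) as the law of f(x) + Z with Z ∼ N(0, (Δ/μ)² I_d). Then for every ε > 0, M satisfies (ε, δ_μ(ε))-LDP, where δ_μ(ε) = Φ(−ε/μ + μ/2) − e^ε Φ(−ε/μ − μ/2) and Φ is the cumulative distribution function of the standard normal distribution: for all x, x′ ∈ 𝒳 and every measurable E ⊆ ℝ^d, M(x)(E) ≤ e^ε · M(x′)(E)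 + δ_μ(ε). -/
open MeasureTheory ProbabilityTheory

/-- The Gaussian measure `N(0, σ² I_d)` on `ℝ^d`: the product of `d` i.i.d.
centered real Gaussians with variance `σ²` (here `v = σ²`). -/
noncomputable def isoGaussian (d : ℕ) (v : NNReal) : Measure (Fin d → ℝ) :=
  Measure.pi fun _ : Fin d => gaussianReal 0 v

/-- The Gaussian mechanism on `ℝ^d`: on input `x` it outputs `f x + Z` with
`Z ∼ N(0, σ² I_d)`. -/
noncomputable def gaussianMechanism {d : ℕ} {𝒳 : Type*} (f : 𝒳 → (Fin d → ℝ))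
    (v : NNReal) (x : 𝒳) : Measure (Fin d → ℝ) :=
  (isoGaussian d v).map (fun z => f x + z)

/-- `Φ`, the cumulative distribution function of the standard normal
distribution. -/
noncomputable def stdNormalCDF (t : ℝ) : ℝ :=
  (gaussianReal 0 1 (Set.Iic t)).toReal

/-
The log-likelihood ratio of `N(a, v I)` against `N(b, v I)` is affine in `z`, so by the
Neyman–Pearson argument the worst event is a half-space `{⟪a - b, z⟫ ≥ t}`. Half-spaces have the
probabilities of two one-dimensional Gaussians with common variance `‖a - b‖² / v` whose means
differ by that same amount, hence by at most `μ` standard deviations. Any such pair is obtained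
from the pair `N(μ, 1)`, `N(0, 1)` by a scaling followed by convolution with an independent
Gaussian, and post-processing preserves the bound; for `N(μ, 1)`, `N(0, 1)` the worst event is a
half-line, whose probabilities give exactly `δ_μ(ε)`.
-/

open scoped ENNReal NNReal

/-- With `k = exp ε`, the inequality that `(ε, δ)`-LDP demands of the pair `M x`, `M x'`. -/
def Indistinguishable {α : Type*} [MeasurableSpace α] (k δ : ℝ≥0∞) (P Q : Measure α) : Prop :=
  ∀ E, MeasurableSet E → P E ≤ k * Q E + δ

namespace Indistinguishable

variable {k δ : ℝ≥0∞}

theorem map {α β : Type*} [MeasurableSpace α] [MeasurableSpace β] {P Q : Measure α}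
    (h : Indistinguishable k δ P Q) {g : α → β} (hg : Measurable g) :
    Indistinguishable k δ (P.map g) (Q.map g) := fun E hE => by
  simpa only [Measure.map_apply hg hE] using h _ (hg hE)

theorem conv {M : Type*} [AddMonoid M] [MeasurableSpace M] [MeasurableAdd₂ M] {P Q : Measure M}
    [SFinite P] [SFinite Q] (h : Indistinguishable k δ P Q) (ν : Measure M)
    [IsProbabilityMeasure ν] : Indistinguishable k δ (ν ∗ P) (ν ∗ Q) := fun G hG => by
  have hG' : MeasurableSet ((fun p : M × M => p.1 + p.2) ⁻¹' G) := measurable_add hG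
  have conv_apply (N : Measure M) [SFinite N] :
      (ν ∗ N) G = ∫⁻ x, N ((fun y => x + y) ⁻¹' G) ∂ν := by
    rw [Measure.conv, Measure.map_apply measurable_add hG, Measure.prod_apply hG']
    rfl
  have hQ : Measurable fun x => Q ((fun y => x + y) ⁻¹' G) := measurable_measure_prodMk_left hG'
  calc (ν ∗ P) G = ∫⁻ x, P ((fun y => x + y) ⁻¹' G) ∂ν := conv_apply P
    _ ≤ ∫⁻ x, (k * Q ((fun y => x + y) ⁻¹' G) + δ) ∂ν :=
      lintegral_mono fun x => h _ (measurable_const_add x hG)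
    _ = k * (ν ∗ Q) G + δ := by
      rw [lintegral_add_right _ measurable_const, lintegral_const_mul _ hQ, lintegral_const,
        measure_univ, mul_one, conv_apply Q]

end Indistinguishable

/-- Neyman–Pearson: the superlevel set of the log-likelihood ratio `φ` is the worst event. -/
theorem indistinguishable_withDensity_exp {α : Type*} [MeasurableSpace α] {Q : Measure α}
    [IsFiniteMeasure Q] {φ : α → ℝ} (hφ : Measurable φ) {ε : ℝ} {δ : ℝ≥0∞}
    (hA : Q.withDensity (fun x => ENNReal.ofReal (Real.exp (φ x))) {x | ε ≤ φ x}
      ≤ ENNReal.ofReal (Real.exp ε) * Q {x | ε ≤ φ x} + δ) :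
    Indistinguishable (ENNReal.ofReal (Real.exp ε)) δ
      (Q.withDensity fun x => ENNReal.ofReal (Real.exp (φ x))) Q := by
  set ρ := fun x => ENNReal.ofReal (Real.exp (φ x))
  set k := ENNReal.ofReal (Real.exp ε)
  set A := {x | ε ≤ φ x}
  have hAm : MeasurableSet A := measurableSet_le measurable_const hφ
  intro E hE
  have below : Q.withDensity ρ (E \ A) ≤ k * Q (E \ A) := by
    rw [withDensity_apply _ (hE.diff hAm), ← setLIntegral_const]
    refine setLIntegral_mono measurable_const fun x hx => ?_
    exact ENNReal.ofReal_le_ofReal (Real.exp_le_exp.2 (not_le.1 hx.2).le)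
  have above : k * Q (A \ E) ≤ Q.withDensity ρ (A \ E) := by
    rw [withDensity_apply _ (hAm.diff hE), ← setLIntegral_const]
    exact setLIntegral_mono (by fun_prop) fun x hx =>
      ENNReal.ofReal_le_ofReal (Real.exp_le_exp.2 hx.1)
  have inside : Q.withDensity ρ (E ∩ A) ≤ k * Q (E ∩ A) + δ := by
    have hfin : k * Q (A \ E) ≠ ⊤ := ENNReal.mul_ne_top ENNReal.ofReal_ne_top (measure_ne_top _ _)
    refine (ENNReal.add_le_add_iff_right hfin).1 ?_
    calc Q.withDensity ρ (E ∩ A) + k * Q (A \ E)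
        ≤ Q.withDensity ρ (A ∩ E) + Q.withDensity ρ (A \ E) := by
          rw [Set.inter_comm]; gcongr
      _ = Q.withDensity ρ A := measure_inter_add_sdiff A hE
      _ ≤ k * Q A + δ := hA
      _ = k * Q (E ∩ A) + δ + k * Q (A \ E) := by
          rw [← measure_inter_add_sdiff A hE, Set.inter_comm]; ring
  calc Q.withDensity ρ E = Q.withDensity ρ (E ∩ A) + Q.withDensity ρ (E \ A) :=
        (measure_inter_add_sdiff E hAm).symm
    _ ≤ k * Q (E ∩ A) + δ + k * Q (E \ A) := add_le_add inside below
    _ = k * Q E + δ := by rw [← measure_inter_add_sdiff E hAm]; ring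

theorem Measure.pi_withDensity {ι : Type*} [Fintype ι] {α : ι → Type*}
    [∀ i, MeasurableSpace (α i)] (μ : ∀ i, Measure (α i)) [∀ i, IsProbabilityMeasure (μ i)]
    {f : ∀ i, α i → ℝ≥0∞} (hf : ∀ i, Measurable (f i))
    [∀ i, SigmaFinite ((μ i).withDensity (f i))] :
    Measure.pi (fun i => (μ i).withDensity (f i))
      = (Measure.pi μ).withDensity fun x => ∏ i, f i (x i) := by
  refine Measure.pi_eq fun s hs => ?_
  have hind : (Set.univ.pi s).indicator (fun x => ∏ i, f i (x i))
      = fun x => ∏ i, (s i).indicator (f i) (x i) := by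
    ext x
    by_cases hx : x ∈ Set.univ.pi s
    · simp [Set.indicator_of_mem hx, Set.indicator_of_mem (Set.mem_univ_pi.1 hx _)]
    · obtain ⟨i, hi⟩ : ∃ i, x i ∉ s i := by simpa [Set.mem_univ_pi] using hx
      rw [Set.indicator_of_notMem hx, eq_comm]
      exact Finset.prod_eq_zero (Finset.mem_univ i) (Set.indicator_of_notMem hi _)
  have hmeas i : Measurable ((s i).indicator (f i)) := (hf i).indicator (hs i)
  rw [withDensity_apply _ (.univ_pi hs), ← lintegral_indicator (.univ_pi hs), hind,
    lintegral_prod_eq_prod_lintegral_of_indepFun _ _ (iIndepFun_pi fun i => (hmeas i).aemeasurable)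
      fun i => (hmeas i).comp (measurable_pi_apply i)]
  refine Finset.prod_congr rfl fun i _ => ?_
  rw [(measurePreserving_eval μ i).lintegral_comp (hmeas i), lintegral_indicator (hs i),
    withDensity_apply _ (hs i)]

theorem gaussianReal_eq_withDensity (m₁ m₂ : ℝ) {v : ℝ≥0} (hv : v ≠ 0) :
    gaussianReal m₁ v = (gaussianReal m₂ v).withDensity
      fun x => ENNReal.ofReal (Real.exp (((m₁ - m₂) * x - (m₁ ^ 2 - m₂ ^ 2) / 2) / v)) := by
  have hv' : (v : ℝ) ≠ 0 := NNReal.coe_ne_zero.2 hv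
  have hpdf x : gaussianPDFReal m₂ v x * Real.exp (((m₁ - m₂) * x - (m₁ ^ 2 - m₂ ^ 2) / 2) / v)
      = gaussianPDFReal m₁ v x := by
    rw [gaussianPDFReal, gaussianPDFReal, mul_assoc, ← Real.exp_add]
    congr 2
    field_simp
    ring
  rw [gaussianReal_of_var_ne_zero _ hv, gaussianReal_of_var_ne_zero _ hv,
    ← withDensity_mul _ (measurable_gaussianPDF _ _) (by fun_prop)]
  congr 1 with x
  rw [Pi.mul_apply, gaussianPDF, gaussianPDF, ← ENNReal.ofReal_mul (gaussianPDFReal_nonneg _ _ _),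
    hpdf]

theorem pi_gaussianReal_map_sum {ι : Type*} [Fintype ι] (m : ι → ℝ) (v : ι → ℝ≥0) :
    (Measure.pi fun i => gaussianReal (m i) (v i)).map (fun z => ∑ i, z i)
      = gaussianReal (∑ i, m i) (∑ i, v i) := by
  refine Measure.ext_of_charFun ?_
  rw [charFun_map_sum_pi_eq_prod]
  ext t
  simp only [Finset.prod_apply, charFun_gaussianReal, ← Complex.exp_sum]
  push_cast
  rw [Finset.sum_sub_distrib, Finset.mul_sum, Finset.sum_mul, Finset.sum_mul, Finset.sum_div]

theorem pi_gaussianReal_map_sum_mul {ι : Type*} [Fintype ι] (c m : ι → ℝ) (v : ι → ℝ≥0) :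
    (Measure.pi fun i => gaussianReal (m i) (v i)).map (fun z => ∑ i, c i * z i)
      = gaussianReal (∑ i, c i * m i) (∑ i, NNReal.mk (c i ^ 2) (sq_nonneg _) * v i) := by
  have hc : (fun z : ι → ℝ => ∑ i, c i * z i) = (fun z => ∑ i, z i) ∘ fun z i => c i * z i := rfl
  rw [hc, ← Measure.map_map (by fun_prop) (by fun_prop),
    Measure.pi_map_pi fun i => (measurable_const_mul (c i)).aemeasurable]
  simp_rw [gaussianReal_map_const_mul]
  exact pi_gaussianReal_map_sum _ _

theorem gaussianReal_one_apply_Ici (m t : ℝ) :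
    gaussianReal m 1 (Set.Ici t) = ENNReal.ofReal (stdNormalCDF (m - t)) := by
  have hpre : (fun x => m - x) ⁻¹' Set.Ici t = Set.Iic (m - t) := by
    ext x; simp [le_sub_comm]
  rw [← sub_zero m, ← gaussianReal_map_const_sub, Measure.map_apply (by fun_prop) measurableSet_Ici,
    sub_zero, hpre, stdNormalCDF, ENNReal.ofReal_toReal (measure_ne_top _ _)]

noncomputable def gdpDelta (μ ε : ℝ) : ℝ :=
  stdNormalCDF (-ε / μ + μ / 2) - Real.exp ε * stdNormalCDF (-ε / μ - μ / 2)

theorem gaussianReal_one_indistinguishable {μ : ℝ} (hμ : 0 < μ) (ε : ℝ) :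
    Indistinguishable (ENNReal.ofReal (Real.exp ε)) (ENNReal.ofReal (gdpDelta μ ε))
      (gaussianReal μ 1) (gaussianReal 0 1) := by
  have hP : gaussianReal μ 1
      = (gaussianReal 0 1).withDensity fun x => ENNReal.ofReal (Real.exp (μ * x - μ ^ 2 / 2)) := by
    simpa using gaussianReal_eq_withDensity μ 0 one_ne_zero
  rw [hP]
  refine indistinguishable_withDensity_exp (by fun_prop) ?_
  rw [← hP]
  have hA : {x : ℝ | ε ≤ μ * x - μ ^ 2 / 2} = Set.Ici (ε / μ + μ / 2) := by
    ext x
    have : μ * x - μ ^ 2 / 2 - ε = μ * (x - (ε / μ + μ / 2)) := by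
      field_simp
      ring
    rw [Set.mem_ofPred_eq, Set.mem_Ici, ← sub_nonneg, this, mul_nonneg_iff_of_pos_left hμ,
      sub_nonneg]
  rw [hA, gaussianReal_one_apply_Ici, gaussianReal_one_apply_Ici,
    show μ - (ε / μ + μ / 2) = -ε / μ + μ / 2 by ring,
    show 0 - (ε / μ + μ / 2) = -ε / μ - μ / 2 by ring,
    ← ENNReal.ofReal_mul (Real.exp_nonneg ε)]
  calc ENNReal.ofReal (stdNormalCDF (-ε / μ + μ / 2))
      = ENNReal.ofReal (Real.exp ε * stdNormalCDF (-ε / μ - μ / 2) + gdpDelta μ ε) := by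
        rw [gdpDelta]; ring_nf
    _ ≤ _ := ENNReal.ofReal_add_le

theorem gaussianReal_indistinguishable {μ : ℝ} (hμ : 0 < μ) (ε : ℝ) {m₁ m₂ : ℝ} {v : ℝ≥0}
    (h : (m₁ - m₂) ^ 2 ≤ μ ^ 2 * v) :
    Indistinguishable (ENNReal.ofReal (Real.exp ε)) (ENNReal.ofReal (gdpDelta μ ε))
      (gaussianReal m₁ v) (gaussianReal m₂ v) := by
  set c := (m₁ - m₂) / μ
  have hc : c * μ = m₁ - m₂ := div_mul_cancel₀ _ hμ.ne'
  have hcv : NNReal.mk (c ^ 2) (sq_nonneg _) * 1 ≤ v := by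
    rw [← NNReal.coe_le_coe, NNReal.coe_mul, NNReal.coe_mk, NNReal.coe_one, mul_one, div_pow,
      div_le_iff₀ (by positivity), mul_comm]
    exact h
  have key := ((gaussianReal_one_indistinguishable hμ ε).map (measurable_const_mul c)).conv
    (gaussianReal m₂ (v - NNReal.mk (c ^ 2) (sq_nonneg _) * 1))
  rwa [gaussianReal_map_const_mul, gaussianReal_map_const_mul, gaussianReal_conv_gaussianReal,
    gaussianReal_conv_gaussianReal, tsub_add_cancel_of_le hcv, mul_zero, add_zero, hc,
    add_sub_cancel] at key

theorem pi_gaussianReal_indistinguishable {ι : Type*} [Fintype ι] {μ : ℝ} (hμ : 0 < μ) (ε : ℝ)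
    {a b : ι → ℝ} {v : ℝ≥0} (hv : v ≠ 0) (hab : ∑ i, (a i - b i) ^ 2 ≤ μ ^ 2 * v) :
    Indistinguishable (ENNReal.ofReal (Real.exp ε)) (ENNReal.ofReal (gdpDelta μ ε))
      (Measure.pi fun i => gaussianReal (a i) v) (Measure.pi fun i => gaussianReal (b i) v) := by
  set φ : (ι → ℝ) → ℝ := fun z => ∑ i, ((a i - b i) * z i - (a i ^ 2 - b i ^ 2) / 2) / v
  have hP : Measure.pi (fun i => gaussianReal (a i) v)
      = (Measure.pi fun i => gaussianReal (b i) v).withDensity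
          fun z => ENNReal.ofReal (Real.exp (φ z)) := by
    rw [funext fun i => gaussianReal_eq_withDensity (a i) (b i) hv,
      Measure.pi_withDensity _ fun i => by fun_prop]
    congr 1 with z
    rw [Real.exp_sum, ENNReal.ofReal_prod_of_nonneg fun i _ => (Real.exp_pos _).le]
  rw [hP]
  refine indistinguishable_withDensity_exp (by fun_prop) ?_
  rw [← hP]
  set T : (ι → ℝ) → ℝ := fun z => ∑ i, (a i - b i) / v * z i
  have hT : Measurable T := by fun_prop
  have hA : {z | ε ≤ φ z} = T ⁻¹' Set.Ici (ε + ∑ i, (a i ^ 2 - b i ^ 2) / 2 / v) := by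
    ext z
    have : φ z = T z - ∑ i, (a i ^ 2 - b i ^ 2) / 2 / v := by
      rw [← Finset.sum_sub_distrib]
      exact Finset.sum_congr rfl fun i _ => by ring
    rw [Set.mem_ofPred_eq, this, Set.mem_preimage, Set.mem_Ici, le_sub_iff_add_le]
  rw [hA, ← Measure.map_apply hT measurableSet_Ici, ← Measure.map_apply hT measurableSet_Ici,
    pi_gaussianReal_map_sum_mul, pi_gaussianReal_map_sum_mul]
  refine gaussianReal_indistinguishable hμ ε ?_ _ measurableSet_Ici
  have hvpos : (0 : ℝ) < v := by positivity
  have hmean : ∑ i, (a i - b i) / v * a i - ∑ i, (a i - b i) / v * b i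
      = (∑ i, (a i - b i) ^ 2) / v := by
    rw [← Finset.sum_sub_distrib, Finset.sum_div]
    exact Finset.sum_congr rfl fun i _ => by field_simp
  have hvar : ((∑ i, NNReal.mk (((a i - b i) / v) ^ 2) (sq_nonneg _) * v : ℝ≥0) : ℝ)
      = (∑ i, (a i - b i) ^ 2) / v := by
    rw [NNReal.coe_sum, Finset.sum_div]
    exact Finset.sum_congr rfl fun i _ => by
      rw [NNReal.coe_mul, NNReal.coe_mk]; field_simp
  rw [hmean, hvar, sq]
  exact mul_le_mul_of_nonneg_right ((div_le_iff₀ hvpos).2 hab) (by positivity)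

theorem gaussianMechanism_eq_pi {d : ℕ} {𝒳 : Type*} (f : 𝒳 → (Fin d → ℝ)) (v : ℝ≥0) (x : 𝒳) :
    gaussianMechanism f v x = Measure.pi fun i => gaussianReal (f x i) v := by
  rw [gaussianMechanism, isoGaussian, show (fun z => f x + z) = fun z i => f x i + z i from rfl,
    Measure.pi_map_pi fun i => (measurable_const_add _).aemeasurable]
  simp_rw [gaussianReal_map_const_add, zero_add]

theorem gdp_mechanism_ldp_general {d : ℕ} {𝒳 : Type*}
    (f : 𝒳 → (Fin d → ℝ)) (Δ μ : ℝ) (hΔ : 0 < Δ) (hμ : 0 < μ)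
    (hsens : ∀ x x' : 𝒳, Real.sqrt (∑ i, (f x i - f x' i) ^ 2) ≤ Δ)
    (v : NNReal) (hv : (v : ℝ) = (Δ / μ) ^ 2)
    (ε : ℝ) :
    ∀ x x' : 𝒳, ∀ E : Set (Fin d → ℝ), MeasurableSet E →
      gaussianMechanism f v x E ≤
        ENNReal.ofReal (Real.exp ε) * gaussianMechanism f v x' E
          + ENNReal.ofReal
              (stdNormalCDF (-ε / μ + μ / 2)
                - Real.exp ε * stdNormalCDF (-ε / μ - μ / 2)) := by
  intro x x'
  have hv0 : v ≠ 0 := by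
    rw [← NNReal.coe_ne_zero, hv]
    positivity
  have hsq : ∑ i, (f x i - f x' i) ^ 2 ≤ μ ^ 2 * v := by
    rw [hv, ← mul_pow, mul_div_cancel₀ _ hμ.ne']
    exact (Real.sqrt_le_iff.1 (hsens x x')).2
  rw [gaussianMechanism_eq_pi, gaussianMechanism_eq_pi]
  exact pi_gaussianReal_indistinguishable hμ ε hv0 hsq

/-- **Gaussian differential privacy duality for the Gaussian mechanism.**
If `f : 𝒳 → ℝ^d` has `ℓ₂`-sensitivity at most `Δ`, `μ > 0`, and
`M x = law of f x + Z` with `Z ∼ N(0, (Δ/μ)² I_d)` (the `μ`-GDP mechanism),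
then for every `ε > 0` the mechanism `M` satisfies `(ε, δ_μ(ε))`-LDP, where
`δ_μ(ε) = Φ(−ε/μ + μ/2) − e^ε Φ(−ε/μ − μ/2)`. -/
theorem gdp_mechanism_ldp {d : ℕ} {𝒳 : Type*} [MeasurableSpace 𝒳]
    (f : 𝒳 → (Fin d → ℝ)) (Δ μ : ℝ) (hΔ : 0 < Δ) (hμ : 0 < μ)
    (hsens : ∀ x x' : 𝒳, Real.sqrt (∑ i, (f x i - f x' i) ^ 2) ≤ Δ)
    (v : NNReal) (hv : (v : ℝ) = (Δ / μ) ^ 2)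
    (ε : ℝ) (hε : 0 < ε) :
    ∀ x x' : 𝒳, ∀ E : Set (Fin d → ℝ), MeasurableSet E →
      gaussianMechanism f v x E ≤
        ENNReal.ofReal (Real.exp ε) * gaussianMechanism f v x' E
          + ENNReal.ofReal
              (stdNormalCDF (-ε / μ + μ / 2)
                - Real.exp ε * stdNormalCDF (-ε / μ - μ / 2)) :=
  gdp_mechanism_ldp_general f Δ μ hΔ hμ hsens v hv ε
end
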